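/- Let R be a commutative ℚ-algebra, A(t) ∈ R[[t]] any power series, and B(t) ∈ R[[t]] a power series with zero constant term. Define polynomials s_k(X) ∈ R[X] by the identity Σ_{k≥0} s_k(X) t^k/k! = A(t)·exp(X·B(t)) in (R[X])[[t]], and let W_B ∈ tR[[t]] be the unique power series with W_B(t·exp(B(t))) = t. Then in (R[X])[[t]]: Σ_{k≥0} s_k(X − k) t^k/k! = (A(W_B(t)) / (1 + W_B(t)·B'(W_B(t)))) · exp(X·B(W_B(t))), where s_k(X − k) is the composition of s_k with X − k, B' is the formal derivative of B, and the power series 1 + W_B(t)·B'(W_B(t)) is invertible in R[[t]] because its constant term is 1. -/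

import Mathlib

/-
Put `E = exp B` and `F = X * E`, so that `W` is the compositional inverse of `F`. As
`exp ((X - k) B) = exp (X B) * E⁻ᵏ`, the left side is `[tᵏ] A * exp (X B) * E⁻ᵏ`. For the series
`P` on the right, `P ∘ F = A * exp (X B) / (1 + X B')` and `F' = E * (1 + X B')`, so the claim is
the Lagrange-type identity `[tᵏ] P = [tᵏ] (P ∘ F) * F' * E⁻⁽ᵏ⁺¹⁾`, valid for every `P`. Only the
coefficients of `P` up to degree `k` matter, so it suffices to take `P = Xᵐ` with `m ≤ k`. Then the
right side is `[t^(k-m)] F' * E⁻⁽ᵏ⁻ᵐ⁺¹⁾`, the residue of `F' * F^(m-k-1)`: it is `1` for `m = k` and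
otherwise vanishes, being up to the factor `m - k` the residue of the derivative of `F^(m-k)`.
-/

noncomputable def substPS {R : Type*} [CommRing R] (a f : PowerSeries R) : PowerSeries R :=
  PowerSeries.mk fun n => ∑ᶠ (k : ℕ), PowerSeries.coeff (R := R) k f * PowerSeries.coeff (R := R) n (a ^ k)

namespace PowerSeries

variable {S T : Type*} [CommRing S] [CommRing T]

theorem substPS_eq_subst {a : S⟦X⟧} (ha : constantCoeff a = 0) (f : S⟦X⟧) :
    substPS a f = f.subst a := by
  ext n
  rw [substPS, coeff_mk, coeff_subst' (HasSubst.of_constantCoeff_zero' ha)]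
  rfl

theorem subst_one {a : S⟦X⟧} (ha : HasSubst a) : (1 : S⟦X⟧).subst a = 1 := by
  rw [← coe_substAlgHom ha, map_one]

theorem constantCoeff_subst_of_constantCoeff_zero {a : S⟦X⟧} (ha : constantCoeff a = 0)
    (f : S⟦X⟧) : constantCoeff (f.subst a) = constantCoeff f := by
  rw [← coeff_zero_eq_constantCoeff_apply, coeff_subst' (HasSubst.of_constantCoeff_zero' ha),
    finsum_eq_single _ 0]
  · simp
  · intro d hd
    simp [coeff_zero_eq_constantCoeff_apply, ha, zero_pow hd]

@[simp]
theorem constantCoeff_map (φ : S →+* T) (f : S⟦X⟧) :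
    constantCoeff (map φ f) = φ (constantCoeff f) :=
  MvPowerSeries.constantCoeff_map φ f

theorem map_subst' {a : S⟦X⟧} (ha : HasSubst a) (φ : S →+* T) (f : S⟦X⟧) :
    map φ (f.subst a) = (map φ f).subst (map φ a) :=
  map_subst ha f

theorem derivative_map (φ : S →+* T) (f : S⟦X⟧) :
    d⁄dX T (map φ f) = map φ (d⁄dX S f) := by
  ext n
  simp [coeff_derivative]

theorem eq_of_derivative_eq_mul [IsAddTorsionFree S] {c u v : S⟦X⟧}
    (hu : d⁄dX S u = u * c) (hv : d⁄dX S v = v * c) (h0 : constantCoeff u = constantCoeff v) :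
    u = v := by
  ext n
  induction n using Nat.strong_induction_on with
  | _ n ih =>
    cases n with
    | zero => simpa using h0
    | succ n =>
      have hcoeff : coeff n (u * c) = coeff n (v * c) := by
        simp only [coeff_mul]
        exact Finset.sum_congr rfl fun p hp => by
          rw [ih p.1 (Nat.lt_succ_of_le (Finset.HasAntidiagonal.antidiagonal.fst_le hp))]
      rw [← hu, ← hv, coeff_derivative, coeff_derivative, ← Nat.cast_succ, mul_comm,
        ← nsmul_eq_mul, mul_comm, ← nsmul_eq_mul] at hcoeff
      exact (smul_right_inj (Nat.succ_ne_zero n)).mp hcoeff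

section Exp

variable [Algebra ℚ S] [Algebra ℚ T]

theorem derivative_exp_subst {f : S⟦X⟧} (hf : HasSubst f) :
    d⁄dX S ((exp S).subst f) = (exp S).subst f * d⁄dX S f := by
  rw [derivative_subst hf, derivative_exp]

theorem map_exp_subst {f : S⟦X⟧} (hf : HasSubst f) (φ : S →+* T) :
    map φ ((exp S).subst f) = (exp T).subst (map φ f) := by
  rw [map_subst' hf, map_exp]

theorem exp_subst_add {f g : S⟦X⟧} (hf : constantCoeff f = 0) (hg : constantCoeff g = 0) :
    (exp S).subst (f + g) = (exp S).subst f * (exp S).subst g := by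
  have := IsAddTorsionFree.of_module_rat S
  have hfg : constantCoeff (f + g) = 0 := by rw [map_add, hf, hg, add_zero]
  refine eq_of_derivative_eq_mul (c := d⁄dX S (f + g)) ?_ ?_ ?_
  · exact derivative_exp_subst (HasSubst.of_constantCoeff_zero' hfg)
  · rw [Derivation.leibniz, derivative_exp_subst (HasSubst.of_constantCoeff_zero' hf),
      derivative_exp_subst (HasSubst.of_constantCoeff_zero' hg), map_add, smul_eq_mul, smul_eq_mul]
    ring
  · simp [constantCoeff_subst_of_constantCoeff_zero, hf, hg, hfg]

theorem exp_subst_C_sub_natCast_mul_mul_pow {B : S⟦X⟧} (hB : constantCoeff B = 0) (c : S)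
    (k : ℕ) :
    (exp S).subst (C (c - k) * B) * ((exp S).subst B) ^ k = (exp S).subst (C c * B) := by
  induction k with
  | zero => simp
  | succ k ih =>
    have hsplit : C (c - k) * B = C (c - (k + 1 : ℕ)) * B + B := by
      push_cast; rw [map_sub, map_sub, map_add, map_one]; ring
    rw [← ih, hsplit, exp_subst_add (by simp [hB]) hB, pow_succ]
    ring

end Exp

section Lagrange

variable [IsAddTorsionFree S] {E V : S⟦X⟧}

theorem coeff_derivative_X_mul_mul_pow (hEV : E * V = 1) (j : ℕ) :
    coeff j (d⁄dX S (X * E) * V ^ (j + 1)) = if j = 0 then 1 else 0 := by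
  have hderiv : d⁄dX S (X * E) * V ^ (j + 1) = V ^ j + X * (d⁄dX S E * V ^ (j + 1)) := by
    rw [Derivation.leibniz, derivative_X, smul_eq_mul, smul_eq_mul]
    linear_combination V ^ j * hEV
  rw [hderiv]
  cases j with
  | zero => simp
  | succ i =>
    have hV : d⁄dX S V = -(V ^ 2 * d⁄dX S E) := by
      have h := congrArg (d⁄dX S) hEV
      rw [Derivation.leibniz, Derivation.map_one_eq_zero, smul_eq_mul, smul_eq_mul] at h
      linear_combination V * h - d⁄dX S V * hEV
    have hpow : d⁄dX S (V ^ (i + 1)) = -((i + 1 : ℕ) • (d⁄dX S E * V ^ (i + 2))) := by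
      rw [derivative_pow, hV, nsmul_eq_mul]
      push_cast
      ring
    have hcoeff := congrArg (coeff i) hpow
    rw [coeff_derivative, map_neg, map_nsmul, ← Nat.cast_succ, mul_comm, ← nsmul_eq_mul,
      eq_neg_iff_add_eq_zero, ← smul_add] at hcoeff
    rw [map_add, coeff_succ_X_mul, smul_eq_zero_iff_right (Nat.succ_ne_zero i) |>.mp hcoeff,
      if_neg (Nat.succ_ne_zero i)]

theorem coeff_X_mul_pow_mul_derivative_X_mul_mul_pow (hEV : E * V = 1) (i j : ℕ) :
    coeff (i + j) ((X * E) ^ i * (d⁄dX S (X * E) * V ^ (i + j + 1))) =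
      if j = 0 then 1 else 0 := by
  have hsplit : (X * E) ^ i * (d⁄dX S (X * E) * V ^ (i + j + 1)) =
      X ^ i * (d⁄dX S (X * E) * V ^ (j + 1)) * (E * V) ^ i := by ring
  rw [hsplit, hEV, one_pow, mul_one, add_comm, coeff_X_pow_mul,
    coeff_derivative_X_mul_mul_pow hEV]

theorem coeff_subst_X_mul_mul_derivative_mul_pow (hEV : E * V = 1) (P : S⟦X⟧) (k : ℕ) :
    coeff k (P.subst (X * E) * d⁄dX S (X * E) * V ^ (k + 1)) = coeff k P := by
  have hF : HasSubst (X * E) := HasSubst.of_constantCoeff_zero' (by simp)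
  rw [mul_assoc]
  set G := d⁄dX S (X * E) * V ^ (k + 1)
  have htail : ∀ Q : S⟦X⟧, coeff k ((X ^ (k + 1) * Q).subst (X * E) * G) = 0 := fun Q => by
    rw [subst_mul hF, subst_pow hF, subst_X hF, mul_pow, mul_assoc, mul_assoc,
      coeff_X_pow_mul', if_neg (by omega)]
  have hmonomial : ∀ i ∈ Finset.range (k + 1),
      coeff k ((X * E) ^ i * G) = if i = k then 1 else 0 := by
    intro i hi
    obtain ⟨j, rfl⟩ := Nat.exists_eq_add_of_le (Finset.mem_range_succ_iff.mp hi)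
    rw [coeff_X_mul_pow_mul_derivative_X_mul_mul_pow hEV]
    simp
  conv_lhs => rw [eq_X_pow_mul_shift_add_trunc (k + 1) P]
  rw [subst_add hF, add_mul, map_add, htail, zero_add, subst_coe hF, Polynomial.aeval_def,
    eval₂_trunc_eq_sum_range, Finset.sum_mul, map_sum, algebraMap_eq]
  rw [Finset.sum_congr rfl fun i hi => by rw [mul_assoc, coeff_C_mul, hmonomial i hi]]
  simp

end Lagrange

theorem coeff_mul_exp_subst_C_sub_natCast_mul [Algebra ℚ S] {A B W Y : S⟦X⟧} (c : S)
    (hB : constantCoeff B = 0) (hW0 : constantCoeff W = 0)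
    (hW : subst (X * subst B (exp S)) W = X) (hY : Y * (1 + W * subst W (d⁄dX S B)) = 1)
    (k : ℕ) :
    coeff k (A * subst (C (c - k) * B) (exp S)) =
      coeff k (subst W A * Y * subst (C c * subst W B) (exp S)) := by
  have := IsAddTorsionFree.of_module_rat S
  have hBs : HasSubst B := HasSubst.of_constantCoeff_zero' hB
  have hWs : HasSubst W := HasSubst.of_constantCoeff_zero' hW0
  set E : S⟦X⟧ := subst B (exp S)
  have hEV : E * invOfUnit E 1 = 1 :=
    mul_invOfUnit E 1 (by simp [E, constantCoeff_subst_of_constantCoeff_zero hB])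
  set V := invOfUnit E 1
  have hF : HasSubst (X * E) := HasSubst.of_constantCoeff_zero' (by simp)
  have hWF : ∀ f : S⟦X⟧, subst (X * E) (subst W f : S⟦X⟧) = f := fun f => by
    rw [subst_comp_subst_apply hWs hF, hW, X_subst]
  have hshift : subst (C (c - k) * B) (exp S) = subst (C c * B) (exp S) * V ^ k := by
    have hEVk : E ^ k * V ^ k = 1 := by rw [← mul_pow, hEV, one_pow]
    rw [← exp_subst_C_sub_natCast_mul_mul_pow hB c k]
    linear_combination (-subst (C (c - k) * B) (exp S) : S⟦X⟧) * hEVk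
  have hexp :
      subst (X * E) (subst (C c * subst W B) (exp S) : S⟦X⟧) = subst (C c * B) (exp S) := by
    rw [subst_comp_subst_apply (HasSubst.of_constantCoeff_zero'
      (by simp [constantCoeff_subst_of_constantCoeff_zero hW0, hB])) hF, subst_mul hF, subst_C,
      hWF]
    rfl
  have hYF : subst (X * E) Y * (1 + X * d⁄dX S B) = 1 := by
    have h := congrArg (subst (X * E) · : S⟦X⟧ → S⟦X⟧) hY
    rwa [subst_mul hF, subst_add hF, subst_one hF, subst_mul hF, hW, hWF] at h
  have hF' : d⁄dX S (X * E) = E * (1 + X * d⁄dX S B) := by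
    rw [Derivation.leibniz, derivative_exp_subst hBs, derivative_X, smul_eq_mul, smul_eq_mul]
    ring
  rw [hshift, ← coeff_subst_X_mul_mul_derivative_mul_pow hEV
    (subst W A * Y * subst (C c * subst W B) (exp S)), subst_mul hF, subst_mul hF, hWF, hexp, hF']
  congr 1
  linear_combination (-(A * subst (C c * B) (exp S) * V ^ k * E * V)) * hYF -
    (A * subst (C c * B) (exp S) * V ^ k) * hEV

theorem map_aeval_map_C_mul_exp_subst_C_mul {R : Type*} [CommRing R] [Algebra ℚ R]
    {B : R⟦X⟧} (hB : constantCoeff B = 0) (A : R⟦X⟧) (p q : Polynomial R) :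
    map (Polynomial.aeval (R := R) q : Polynomial R →+* Polynomial R)
        (map Polynomial.C A * subst (C p * map Polynomial.C B) (exp (Polynomial R))) =
      map Polynomial.C A * subst (C (p.comp q) * map Polynomial.C B) (exp (Polynomial R)) := by
  have hC : ∀ f : R⟦X⟧,
      map (Polynomial.aeval (R := R) q : Polynomial R →+* Polynomial R) (map Polynomial.C f) =
        map Polynomial.C f :=
    fun f => by ext; simp
  rw [map_mul, hC, map_exp_subst (HasSubst.of_constantCoeff_zero' (by simp [hB])), map_mul, map_C,
    hC, AlgHom.coe_toRingHom, ← Polynomial.comp_eq_aeval]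

end PowerSeries

open PowerSeries in
/-- With Sheffer-type polynomials `s_k` defined by
`Σ_k s_k(X)·tᵏ/k! = A(t)·exp(X·B(t))` in `(R[X])[[t]]` and `W_B` the unique series with
`W_B(t·exp(B(t))) = t`, one has
`Σ_k s_k(X−k)·tᵏ/k! = (A(W_B(t))/(1 + W_B(t)·B'(W_B(t))))·exp(X·B(W_B(t)))`,
where the inverse of `1 + W_B(t)·B'(W_B(t))` (constant term `1`) is taken via
`PowerSeries.invOfUnit` at the unit `1`. -/
theorem stmt_7 (R : Type*) [CommRing R] [Algebra ℚ R]
    (A : PowerSeries R)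
    (B : PowerSeries R) (hB0 : PowerSeries.constantCoeff (R := R) B = 0)
    (s : ℕ → Polynomial R)
    (hs : ∀ k : ℕ,
      PowerSeries.coeff (R := Polynomial R) k
        (PowerSeries.map Polynomial.C A *
          substPS
            (PowerSeries.C (R := Polynomial R) Polynomial.X * PowerSeries.map Polynomial.C B)
            (PowerSeries.exp (Polynomial R)))
      = (k.factorial : ℚ)⁻¹ • s k)
    (W : PowerSeries R) (hW0 : PowerSeries.constantCoeff (R := R) W = 0)
    (hW : substPS (PowerSeries.X * substPS B (PowerSeries.exp R)) W = PowerSeries.X) :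
    ∀ k : ℕ,
      (k.factorial : ℚ)⁻¹ • (s k).comp (Polynomial.X - Polynomial.C (k : R)) =
      PowerSeries.coeff (R := Polynomial R) k
        (PowerSeries.map Polynomial.C
            (substPS W A *
              PowerSeries.invOfUnit
                (1 + W * substPS W (PowerSeries.derivativeFun B)) 1) *
          substPS
            (PowerSeries.C (R := Polynomial R) Polynomial.X *
              PowerSeries.map Polynomial.C (substPS W B))
            (PowerSeries.exp (Polynomial R))) := by
  intro k
  have hBs : HasSubst B := HasSubst.of_constantCoeff_zero' hB0
  have hWs : HasSubst W := HasSubst.of_constantCoeff_zero' hW0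
  have hCB : constantCoeff (map Polynomial.C B) = 0 := by simp [hB0]
  rw [substPS_eq_subst hB0, substPS_eq_subst (by simp)] at hW
  rw [substPS_eq_subst (a := C Polynomial.X * map Polynomial.C B) (by simp [hB0])] at hs
  simp only [substPS_eq_subst hW0]
  rw [substPS_eq_subst (by simp [constantCoeff_subst_of_constantCoeff_zero hW0, hB0])]
  have hW' :
      subst (X * subst (map Polynomial.C B) (exp (Polynomial R))) (map Polynomial.C W) = X := by
    have h := congrArg (map Polynomial.C) hW
    rwa [map_subst' (HasSubst.of_constantCoeff_zero' (by simp)), map_mul, map_X,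
      map_exp_subst hBs] at h
  have hY : map Polynomial.C (invOfUnit (1 + W * subst W (d⁄dX R B)) 1) *
      (1 + map Polynomial.C W *
        subst (map Polynomial.C W) (d⁄dX (Polynomial R) (map Polynomial.C B))) = 1 := by
    have h := congrArg (map Polynomial.C)
      (invOfUnit_mul (1 + W * subst W (d⁄dX R B)) 1 (by simp [hW0]))
    rwa [map_mul, map_one, map_add, map_one, map_mul, map_subst' hWs, ← derivative_map] at h
  rw [Polynomial.comp_eq_aeval, ← map_rat_smul, ← hs k, ← AlgHom.coe_toRingHom, ← coeff_map,
    map_aeval_map_C_mul_exp_subst_C_mul hB0, Polynomial.X_comp, map_natCast,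
    map_mul (map Polynomial.C), map_subst' hWs, map_subst' hWs]
  exact coeff_mul_exp_subst_C_sub_natCast_mul Polynomial.X hCB (by simp [hW0]) hW' hY k
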